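/- arXiv:1309.0896 — 2 statements merged into one kernel-verified Lean document; each statement's English description precedes it below -/
import Mathlib

section
/- For every Łukasiewicz μ-term t(x₁, …, xₙ), the function r⃗ ↦ t(r⃗) : [0,1]ⁿ → [0,1] is representable by a system of conditioned linear expressions with rational coefficients: there exists a finite family of pairs (Cᵢ, eᵢ), where each eᵢ is a rational affine map q₁x₁ + … + qₙxₙ + q and each Cᵢ is a finite set of strict and non-strict inequalities between rational affine maps in x₁, …, xₙ, such that (1) for every r⃗ ∈ [0,1]ⁿ there is an i such that all inequalities of Cᵢ hold at r⃗, and (2) for every r⃗ ∈ [0,1]ⁿ and every i, if all inequalities of Cᵢ hold at r⃗ then eᵢ(r⃗) = t(r⃗). -/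
open unitInterval

instance : Fact ((0:ℝ) ≤ 1) := ⟨zero_le_one⟩

noncomputable section

/-- Łukasiewicz strong disjunction on `[0,1]`: `x ⊕ y = min 1 (x + y)`. -/
def lukAdd (x y : I) : I :=
  ⟨min 1 ((x : ℝ) + (y : ℝ)),
    le_min zero_le_one (add_nonneg x.2.1 y.2.1), min_le_left _ _⟩

/-- Łukasiewicz strong conjunction on `[0,1]`: `x ⊙ y = max 0 (x + y − 1)`. -/
def lukMul (x y : I) : I :=
  ⟨max 0 ((x : ℝ) + (y : ℝ) - 1), le_max_left _ _,
    max_le zero_le_one (by have := x.2.2; have := y.2.2; linarith)⟩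

/-- Scalar multiplication `q x` by a rational `q ∈ [0,1]`. -/
def lukScal (q : {q : ℚ // 0 ≤ q ∧ q ≤ 1}) (x : I) : I :=
  ⟨(q.1 : ℝ) * (x : ℝ), mul_nonneg (by exact_mod_cast q.2.1) x.2.1, by
    have h1 : (q.1 : ℝ) ≤ 1 := by exact_mod_cast q.2.2
    have h0 : (0 : ℝ) ≤ (q.1 : ℝ) := by exact_mod_cast q.2.1
    have := x.2.2; have := x.2.1
    nlinarith⟩

/-- Łukasiewicz μ-terms with (at most) `n` free variables, in de Bruijn style:
`t ::= x | q t | t ⊔ t | t ⊓ t | t ⊕ t | t ⊙ t | μx.t | νx.t`, with `q`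
ranging over rationals in `[0,1]`. -/
inductive LTerm : ℕ → Type
  | var {n} : Fin n → LTerm n
  | scal {n} : {q : ℚ // 0 ≤ q ∧ q ≤ 1} → LTerm n → LTerm n
  | join {n} : LTerm n → LTerm n → LTerm n
  | meet {n} : LTerm n → LTerm n → LTerm n
  | oplus {n} : LTerm n → LTerm n → LTerm n
  | odot {n} : LTerm n → LTerm n → LTerm n
  | mu {n} : LTerm (n + 1) → LTerm n
  | nu {n} : LTerm (n + 1) → LTerm n

/-- The value `t(r⃗) ∈ [0,1]` of a μ-term at `r⃗ ∈ [0,1]ⁿ`; `μ` and `ν` denote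
the least and greatest fixed points in the complete lattice `[0,1]`, given by
the Knaster–Tarski theorem as `sInf {x | t(r⃗,x) ≤ x}` and
`sSup {x | x ≤ t(r⃗,x)}` respectively. -/
def LTerm.eval : ∀ {n}, LTerm n → (Fin n → I) → I
  | _, .var i, ρ => ρ i
  | _, .scal q t, ρ => lukScal q (t.eval ρ)
  | _, .join t₁ t₂, ρ => max (t₁.eval ρ) (t₂.eval ρ)
  | _, .meet t₁ t₂, ρ => min (t₁.eval ρ) (t₂.eval ρ)
  | _, .oplus t₁ t₂, ρ => lukAdd (t₁.eval ρ) (t₂.eval ρ)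
  | _, .odot t₁ t₂, ρ => lukMul (t₁.eval ρ) (t₂.eval ρ)
  | _, .mu t, ρ => sInf {x : I | t.eval (Fin.snoc ρ x) ≤ x}
  | _, .nu t, ρ => sSup {x : I | x ≤ t.eval (Fin.snoc ρ x)}


/-- A rational affine map `q₁x₁ + … + qₙxₙ + q` in `n` variables. -/
def Affine (n : ℕ) : Type := (Fin n → ℚ) × ℚ

/-- Evaluation of a rational affine map at a real vector. -/
def Affine.evalAff {n : ℕ} (e : Affine n) (r : Fin n → ℝ) : ℝ :=
  (∑ i, (e.1 i : ℝ) * r i) + (e.2 : ℝ)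

/-- A (strict or non-strict) inequality between two rational affine maps:
`(a, b, true)` means `a < b` and `(a, b, false)` means `a ≤ b`. -/
def AffIneq (n : ℕ) : Type := Affine n × Affine n × Bool

/-- The inequality `c` holds at the real vector `r`. -/
def AffIneq.holds {n : ℕ} (c : AffIneq n) (r : Fin n → ℝ) : Prop :=
  if c.2.2 then c.1.evalAff r < c.2.1.evalAff r else c.1.evalAff r ≤ c.2.1.evalAff r

/-!
By induction on the term, `t` is piecewise affine: the cube is covered by finitely many rational
polyhedra, on each of which `t` agrees with a rational affine map. The connectives preserve this
by refining covers, splitting along `e₁ ≤ e₂` for `⊔` and `⊓`. For `μx.t`, at each `r` the least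
fixed point `p` of `x ↦ t(r, x)` is the value at `r` of one of finitely many affine candidates:
`0`, the solution `b(r) / (1 - a)` of `x = a x + b(r)` for an affine piece of `t`, or the root of
an inequality bounding a cell. Otherwise the piece at `(r, p)` is `x ↦ x` on a neighbourhood of
`p`, which contains smaller fixed points. Being a prefixed point is a semilinear condition on a
candidate, so `μx.t` is the least admissible candidate, and such a minimum is piecewise affine.
The case of `νx.t` is dual.
-/

open Filter Topology

section

variable {n : ℕ}

@[simp] lemma coe_lukAdd (x y : I) : (lukAdd x y : ℝ) = min 1 ((x : ℝ) + y) := rfl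

@[simp] lemma coe_lukMul (x y : I) : (lukMul x y : ℝ) = max 0 ((x : ℝ) + y - 1) := rfl

@[simp] lemma coe_lukScal (q : {q : ℚ // 0 ≤ q ∧ q ≤ 1}) (x : I) :
    (lukScal q x : ℝ) = q.1 * x := rfl

lemma Fin.snoc_le_snoc {α : Type*} [Preorder α] {ρ ρ' : Fin n → α} {x x' : α}
    (hρ : ρ ≤ ρ') (hx : x ≤ x') : (Fin.snoc ρ x : Fin (n + 1) → α) ≤ Fin.snoc ρ' x' :=
  (Fin.snocOrderIso fun _ => α).monotone (Prod.mk_le_mk.2 ⟨hx, hρ⟩)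

namespace Affine

instance : AddCommGroup (Affine n) := inferInstanceAs (AddCommGroup ((Fin n → ℚ) × ℚ))

instance : Module ℚ (Affine n) := inferInstanceAs (Module ℚ ((Fin n → ℚ) × ℚ))

def const (q : ℚ) : Affine n := (0, q)

def proj (i : Fin n) : Affine n := (Pi.single i 1, 0)

@[simp] lemma evalAff_add (e₁ e₂ : Affine n) (r : Fin n → ℝ) :
    (e₁ + e₂).evalAff r = e₁.evalAff r + e₂.evalAff r := by
  change ∑ i, ((e₁.1 i + e₂.1 i : ℚ) : ℝ) * r i + ((e₁.2 + e₂.2 : ℚ) : ℝ) = _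
  simp only [evalAff, Rat.cast_add, add_mul, Finset.sum_add_distrib]
  ring

@[simp] lemma evalAff_sub (e₁ e₂ : Affine n) (r : Fin n → ℝ) :
    (e₁ - e₂).evalAff r = e₁.evalAff r - e₂.evalAff r := by
  change ∑ i, ((e₁.1 i - e₂.1 i : ℚ) : ℝ) * r i + ((e₁.2 - e₂.2 : ℚ) : ℝ) = _
  simp only [evalAff, Rat.cast_sub, sub_mul, Finset.sum_sub_distrib]
  ring

@[simp] lemma evalAff_smul (q : ℚ) (e : Affine n) (r : Fin n → ℝ) :
    (q • e).evalAff r = q * e.evalAff r := by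
  change ∑ i, ((q * e.1 i : ℚ) : ℝ) * r i + ((q * e.2 : ℚ) : ℝ) = _
  simp only [evalAff, Rat.cast_mul, mul_add, Finset.mul_sum, mul_assoc]

@[simp] lemma evalAff_const (q : ℚ) (r : Fin n → ℝ) : (const q).evalAff r = q := by
  simp [evalAff, const]

@[simp] lemma evalAff_proj (i : Fin n) (r : Fin n → ℝ) : (proj i).evalAff r = r i := by
  simp [evalAff, proj, Pi.single_apply, apply_ite (Rat.cast : ℚ → ℝ)]

def lastCoeff (e : Affine (n + 1)) : ℚ := e.1 (Fin.last n)

def initPart (e : Affine (n + 1)) : Affine n := (fun j => e.1 j.castSucc, e.2)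

lemma evalAff_snoc (e : Affine (n + 1)) (r : Fin n → ℝ) (x : ℝ) :
    e.evalAff (Fin.snoc r x) = e.lastCoeff * x + e.initPart.evalAff r := by
  simp only [evalAff, lastCoeff, initPart, Fin.sum_univ_castSucc, Fin.snoc_castSucc,
    Fin.snoc_last]
  ring

def substLast (e : Affine (n + 1)) (γ : Affine n) : Affine n := e.initPart + e.lastCoeff • γ

@[simp] lemma evalAff_substLast (e : Affine (n + 1)) (γ : Affine n) (r : Fin n → ℝ) :
    (e.substLast γ).evalAff r = e.evalAff (Fin.snoc r (γ.evalAff r)) := by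
  rw [substLast, evalAff_add, evalAff_smul, evalAff_snoc, add_comm]

/-- The solution `x = b / (1 - a)` of the fixed-point equation `x = a x + b(r)`. -/
def fixpoint (e : Affine (n + 1)) : Affine n := (1 - e.lastCoeff)⁻¹ • e.initPart

lemma evalAff_fixpoint {e : Affine (n + 1)} (he : e.lastCoeff ≠ 1) {r : Fin n → ℝ} {x : ℝ}
    (hx : e.evalAff (Fin.snoc r x) = x) : e.fixpoint.evalAff r = x := by
  have h : (1 : ℝ) - e.lastCoeff ≠ 0 := sub_ne_zero.2 (by exact_mod_cast he.symm)
  rw [evalAff_snoc] at hx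
  rw [fixpoint, evalAff_smul, Rat.cast_inv, Rat.cast_sub, Rat.cast_one, inv_mul_eq_iff_eq_mul₀ h]
  linarith

end Affine

namespace AffIneq

lemma holds_of_lt {a b : Affine n} (s : Bool) {r : Fin n → ℝ} (h : a.evalAff r < b.evalAff r) :
    AffIneq.holds (a, b, s) r := by
  cases s <;> simp [holds, h, h.le]

lemma le_of_holds {c : AffIneq n} {r : Fin n → ℝ} (h : c.holds r) :
    c.1.evalAff r ≤ c.2.1.evalAff r := by
  unfold holds at h
  split at h
  exacts [h.le, h]

def le (g h : Affine n) : AffIneq n := (g, h, false)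

@[simp] lemma holds_le {g h : Affine n} {r : Fin n → ℝ} :
    (le g h).holds r ↔ g.evalAff r ≤ h.evalAff r := by
  simp [le, holds]

def neg (c : AffIneq n) : AffIneq n := (c.2.1, c.1, !c.2.2)

@[simp] lemma holds_neg {c : AffIneq n} {r : Fin n → ℝ} : c.neg.holds r ↔ ¬ c.holds r := by
  obtain ⟨a, b, s⟩ := c
  cases s <;> simp [neg, holds]

def substLast (c : AffIneq (n + 1)) (γ : Affine n) : AffIneq n :=
  (c.1.substLast γ, c.2.1.substLast γ, c.2.2)

@[simp] lemma holds_substLast {c : AffIneq (n + 1)} {γ : Affine n} {r : Fin n → ℝ} :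
    (c.substLast γ).holds r ↔ c.holds (Fin.snoc r (γ.evalAff r)) := by
  simp [substLast, holds]

def slope (c : AffIneq (n + 1)) : ℚ := c.2.1.lastCoeff - c.1.lastCoeff

/-- The value of the last variable at which the two sides of `c` agree, when `c.slope ≠ 0`. -/
def root (c : AffIneq (n + 1)) : Affine n := c.slope⁻¹ • (c.1.initPart - c.2.1.initPart)

lemma evalAff_sub_evalAff_snoc (c : AffIneq (n + 1)) (r : Fin n → ℝ) (y : ℝ) :
    c.2.1.evalAff (Fin.snoc r y) - c.1.evalAff (Fin.snoc r y)
      = c.slope * y + (c.2.1.initPart.evalAff r - c.1.initPart.evalAff r) := by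
  simp only [Affine.evalAff_snoc, slope, Rat.cast_sub]
  ring

lemma eventually_holds_snoc {c : AffIneq (n + 1)} {r : Fin n → ℝ} {p : ℝ}
    (h : c.holds (Fin.snoc r p)) (hroot : c.slope ≠ 0 → c.root.evalAff r ≠ p) :
    ∀ᶠ y in 𝓝 p, c.holds (Fin.snoc r y) := by
  have hgap := evalAff_sub_evalAff_snoc c r
  by_cases hs : c.slope = 0
  · have hconst : ∀ y, c.holds (Fin.snoc r y) ↔ c.holds (Fin.snoc r p) := by
      obtain ⟨a, b, s⟩ := c
      intro y
      have hy := hgap y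
      have hp := hgap p
      simp only [hs, Rat.cast_zero, zero_mul, zero_add] at hy hp
      cases s <;> simp only [holds, Bool.false_eq_true, ↓reduceIte] <;> constructor <;> intro <;>
        linarith
    exact Eventually.of_forall fun y => (hconst y).2 h
  · have hne : c.1.evalAff (Fin.snoc r p) ≠ c.2.1.evalAff (Fin.snoc r p) := by
      intro heq
      apply hroot hs
      have hp := hgap p
      have hs' : (c.slope : ℝ) ≠ 0 := by exact_mod_cast hs
      rw [root, Affine.evalAff_smul, Affine.evalAff_sub, Rat.cast_inv, inv_mul_eq_iff_eq_mul₀ hs']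
      linarith
    have hlt := (le_of_holds h).lt_of_ne hne
    have hcont : Continuous fun y : ℝ => (c.slope : ℝ) * y
        + (c.2.1.initPart.evalAff r - c.1.initPart.evalAff r) := by fun_prop
    have hpos : 0 < (c.slope : ℝ) * p + (c.2.1.initPart.evalAff r - c.1.initPart.evalAff r) := by
      rw [← hgap p]
      linarith
    filter_upwards [(hcont.tendsto p).eventually_const_lt hpos] with y hy
    rw [← hgap y, sub_pos] at hy
    exact holds_of_lt c.2.2 hy

end AffIneq

def polyhedron (C : Finset (AffIneq n)) : Set (Fin n → ℝ) := {r | ∀ c ∈ C, c.holds r}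

/-- The Boolean combinations of rational affine half-spaces, in disjunctive normal form. -/
def IsSemilinear (S : Set (Fin n → ℝ)) : Prop :=
  ∃ (ι : Type) (_ : Finite ι) (C : ι → Finset (AffIneq n)), S = ⋃ i, polyhedron (C i)

lemma compl_polyhedron (C : Finset (AffIneq n)) :
    (polyhedron C)ᶜ = ⋃ c : C, polyhedron {c.1.neg} := by
  ext r
  simp [polyhedron]

lemma polyhedron_biUnion {ι : Type*} [Fintype ι] [DecidableEq (AffIneq n)]
    (C : ι → Finset (AffIneq n)) :
    polyhedron (Finset.univ.biUnion C) = ⋂ i, polyhedron (C i) := by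
  ext r
  simp only [polyhedron, Finset.mem_biUnion, Finset.mem_univ, true_and, Set.mem_iInter]
  exact ⟨fun h i c hc => h c ⟨i, hc⟩, fun h c ⟨i, hc⟩ => h i c hc⟩

lemma preimage_snoc_polyhedron (C : Finset (AffIneq (n + 1))) (γ : Affine n)
    [DecidableEq (AffIneq n)] :
    (fun r => Fin.snoc r (γ.evalAff r)) ⁻¹' polyhedron C
      = polyhedron (C.image fun c => c.substLast γ) := by
  ext r
  simp [polyhedron]

namespace IsSemilinear

lemma of_polyhedron (C : Finset (AffIneq n)) : IsSemilinear (polyhedron C) :=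
  ⟨Unit, inferInstance, fun _ => C, (Set.iUnion_const _).symm⟩

lemma univ : IsSemilinear (Set.univ : Set (Fin n → ℝ)) := by
  simpa [polyhedron] using of_polyhedron (∅ : Finset (AffIneq n))

lemma setOf_le (g h : Affine n) : IsSemilinear {r | g.evalAff r ≤ h.evalAff r} := by
  simpa [polyhedron] using of_polyhedron {AffIneq.le g h}

lemma iUnion {ι : Type} [Finite ι] {S : ι → Set (Fin n → ℝ)} (hS : ∀ i, IsSemilinear (S i)) :
    IsSemilinear (⋃ i, S i) := by
  choose κ _ C hC using hS
  exact ⟨Σ i, κ i, inferInstance, fun k => C k.1 k.2, by simp_rw [hC, Set.iUnion_sigma]⟩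

lemma iInter {ι : Type} [Finite ι] {S : ι → Set (Fin n → ℝ)} (hS : ∀ i, IsSemilinear (S i)) :
    IsSemilinear (⋂ i, S i) := by
  classical
  have := Fintype.ofFinite ι
  choose κ _ C hC using hS
  refine ⟨∀ i, κ i, inferInstance, fun f => Finset.univ.biUnion fun i => C i (f i), ?_⟩
  simp_rw [hC, polyhedron_biUnion]
  exact iInf_iSup_eq

lemma union {S T : Set (Fin n → ℝ)} (hS : IsSemilinear S) (hT : IsSemilinear T) :
    IsSemilinear (S ∪ T) := by
  rw [Set.union_eq_iUnion]
  exact iUnion fun b => by cases b <;> assumption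

lemma inter {S T : Set (Fin n → ℝ)} (hS : IsSemilinear S) (hT : IsSemilinear T) :
    IsSemilinear (S ∩ T) := by
  rw [Set.inter_eq_iInter]
  exact iInter fun b => by cases b <;> assumption

lemma compl {S : Set (Fin n → ℝ)} (hS : IsSemilinear S) : IsSemilinear Sᶜ := by
  obtain ⟨ι, _, C, rfl⟩ := hS
  simp_rw [Set.compl_iUnion, compl_polyhedron]
  exact iInter fun i => iUnion fun c => of_polyhedron _

lemma preimage_snoc {S : Set (Fin (n + 1) → ℝ)} (hS : IsSemilinear S) (γ : Affine n) :
    IsSemilinear ((fun r => Fin.snoc r (γ.evalAff r)) ⁻¹' S) := by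
  classical
  obtain ⟨ι, _, C, rfl⟩ := hS
  simp_rw [Set.preimage_iUnion, preimage_snoc_polyhedron]
  exact iUnion fun i => of_polyhedron _

end IsSemilinear

structure PiecewiseAffineRep (F : (Fin n → I) → ℝ) where
  ι : Type
  [finite : Finite ι]
  cell : ι → Finset (AffIneq n)
  map : ι → Affine n
  exists_mem_cell : ∀ ρ : Fin n → I, ∃ i, Subtype.val ∘ ρ ∈ polyhedron (cell i)
  evalAff_eq : ∀ (ρ : Fin n → I) (i : ι),
    Subtype.val ∘ ρ ∈ polyhedron (cell i) → (map i).evalAff (Subtype.val ∘ ρ) = F ρ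

attribute [instance] PiecewiseAffineRep.finite

def IsPiecewiseAffine (F : (Fin n → I) → ℝ) : Prop := Nonempty (PiecewiseAffineRep F)

section PiecewiseAffine

variable {F G : (Fin n → I) → ℝ}

lemma isPiecewiseAffine_of_semilinear {ι : Type} [Finite ι] {S : ι → Set (Fin n → ℝ)}
    (hS : ∀ i, IsSemilinear (S i)) (e : ι → Affine n)
    (hcover : ∀ ρ : Fin n → I, ∃ i, Subtype.val ∘ ρ ∈ S i)
    (heq : ∀ ρ i, Subtype.val ∘ ρ ∈ S i → (e i).evalAff (Subtype.val ∘ ρ) = F ρ) :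
    IsPiecewiseAffine F := by
  choose κ _ C hC using hS
  refine ⟨{
    ι := Σ i, κ i
    cell := fun k => C k.1 k.2
    map := fun k => e k.1
    exists_mem_cell := fun ρ => ?_
    evalAff_eq := fun ρ k hk => heq ρ k.1 ?_ }⟩
  · obtain ⟨i, hi⟩ := hcover ρ
    rw [hC, Set.mem_iUnion] at hi
    obtain ⟨j, hj⟩ := hi
    exact ⟨⟨i, j⟩, hj⟩
  · rw [hC]
    exact Set.mem_iUnion_of_mem k.2 hk

lemma isPiecewiseAffine_affine (g : Affine n) :
    IsPiecewiseAffine fun ρ => g.evalAff (Subtype.val ∘ ρ) :=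
  ⟨{
    ι := Unit
    cell := fun _ => ∅
    map := fun _ => g
    exists_mem_cell := fun _ => ⟨(), by simp [polyhedron]⟩
    evalAff_eq := fun _ _ _ => rfl }⟩

lemma isPiecewiseAffine_const (q : ℚ) : IsPiecewiseAffine fun _ : Fin n → I => (q : ℝ) := by
  simpa using isPiecewiseAffine_affine (Affine.const (n := n) q)

lemma isPiecewiseAffine_coord (i : Fin n) : IsPiecewiseAffine fun ρ : Fin n → I => (ρ i : ℝ) := by
  simpa using isPiecewiseAffine_affine (Affine.proj i)

lemma IsPiecewiseAffine.const_mul (hF : IsPiecewiseAffine F) (q : ℚ) :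
    IsPiecewiseAffine fun ρ => q * F ρ := by
  obtain ⟨R⟩ := hF
  exact ⟨{ R with
    map := fun i => q • R.map i
    evalAff_eq := fun ρ i hi => by rw [Affine.evalAff_smul, R.evalAff_eq ρ i hi] }⟩

/-- Refine the covers of `F` and `G`, and then the cover for each pair of their affine pieces. -/
lemma IsPiecewiseAffine.map₂ (op : ℝ → ℝ → ℝ)
    (hop : ∀ g₁ g₂ : Affine n,
      IsPiecewiseAffine fun ρ => op (g₁.evalAff (Subtype.val ∘ ρ)) (g₂.evalAff (Subtype.val ∘ ρ)))
    (hF : IsPiecewiseAffine F) (hG : IsPiecewiseAffine G) :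
    IsPiecewiseAffine fun ρ => op (F ρ) (G ρ) := by
  obtain ⟨R₁⟩ := hF
  obtain ⟨R₂⟩ := hG
  let R (ij : R₁.ι × R₂.ι) := (hop (R₁.map ij.1) (R₂.map ij.2)).some
  refine isPiecewiseAffine_of_semilinear (ι := Σ ij, (R ij).ι)
    (S := fun k => polyhedron (R₁.cell k.1.1) ∩ polyhedron (R₂.cell k.1.2)
      ∩ polyhedron ((R k.1).cell k.2))
    (fun k => ((IsSemilinear.of_polyhedron _).inter (.of_polyhedron _)).inter (.of_polyhedron _))
    (fun k => (R k.1).map k.2) (fun ρ => ?_) ?_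
  · obtain ⟨i, hi⟩ := R₁.exists_mem_cell ρ
    obtain ⟨j, hj⟩ := R₂.exists_mem_cell ρ
    obtain ⟨k, hk⟩ := (R (i, j)).exists_mem_cell ρ
    exact ⟨⟨(i, j), k⟩, ⟨hi, hj⟩, hk⟩
  · rintro ρ ⟨⟨i, j⟩, k⟩ ⟨⟨hi, hj⟩, hk⟩
    rw [(R (i, j)).evalAff_eq ρ k hk, R₁.evalAff_eq ρ i hi, R₂.evalAff_eq ρ j hj]

lemma IsPiecewiseAffine.add (hF : IsPiecewiseAffine F) (hG : IsPiecewiseAffine G) :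
    IsPiecewiseAffine fun ρ => F ρ + G ρ :=
  hF.map₂ _ (fun g₁ g₂ => by simpa using isPiecewiseAffine_affine (g₁ + g₂)) hG

lemma IsPiecewiseAffine.sub (hF : IsPiecewiseAffine F) (hG : IsPiecewiseAffine G) :
    IsPiecewiseAffine fun ρ => F ρ - G ρ :=
  hF.map₂ _ (fun g₁ g₂ => by simpa using isPiecewiseAffine_affine (g₁ - g₂)) hG

lemma IsPiecewiseAffine.exists_semilinear_le (hF : IsPiecewiseAffine F)
    (hG : IsPiecewiseAffine G) :
    ∃ S, IsSemilinear S ∧ ∀ ρ : Fin n → I, Subtype.val ∘ ρ ∈ S ↔ F ρ ≤ G ρ := by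
  obtain ⟨R₁⟩ := hF
  obtain ⟨R₂⟩ := hG
  refine ⟨⋃ ij : R₁.ι × R₂.ι, polyhedron (R₁.cell ij.1) ∩ polyhedron (R₂.cell ij.2)
      ∩ {r | (R₁.map ij.1).evalAff r ≤ (R₂.map ij.2).evalAff r},
    .iUnion fun _ =>
      ((IsSemilinear.of_polyhedron _).inter (.of_polyhedron _)).inter (.setOf_le _ _),
    fun ρ => ?_⟩
  simp only [Set.mem_iUnion, Set.mem_inter_iff, Set.mem_ofPred_eq, Prod.exists]
  constructor
  · rintro ⟨i, j, ⟨hi, hj⟩, hle⟩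
    rwa [R₁.evalAff_eq ρ i hi, R₂.evalAff_eq ρ j hj] at hle
  · intro hle
    obtain ⟨i, hi⟩ := R₁.exists_mem_cell ρ
    obtain ⟨j, hj⟩ := R₂.exists_mem_cell ρ
    exact ⟨i, j, ⟨hi, hj⟩, by rwa [R₁.evalAff_eq ρ i hi, R₂.evalAff_eq ρ j hj]⟩

/-- The piece for `γ ∈ Γ` is the set where `γ` is admissible and below every admissible `δ ∈ Γ`. -/
lemma IsPiecewiseAffine.of_isLeast {Γ : Set (Affine n)} (hΓ : Γ.Finite)
    {V : Affine n → Set (Fin n → ℝ)} (hV : ∀ γ, IsSemilinear (V γ))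
    (hF : ∀ ρ : Fin n → I, IsLeast ((fun γ => γ.evalAff (Subtype.val ∘ ρ)) ''
      {γ | γ ∈ Γ ∧ Subtype.val ∘ ρ ∈ V γ}) (F ρ)) :
    IsPiecewiseAffine F := by
  have := hΓ.to_subtype
  refine isPiecewiseAffine_of_semilinear (ι := Γ)
    (S := fun γ => V γ ∩ ⋂ δ : Γ, (V δ)ᶜ ∪ {r | γ.1.evalAff r ≤ δ.1.evalAff r})
    (fun γ => (hV γ).inter (.iInter fun δ => (hV δ).compl.union (.setOf_le _ _)))
    (fun γ => γ.1) (fun ρ => ?_) ?_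
  · obtain ⟨⟨γ, ⟨hγ, hγV⟩, hγF⟩, hlow⟩ := hF ρ
    refine ⟨⟨γ, hγ⟩, hγV, Set.mem_iInter.2 fun δ => or_iff_not_imp_left.2 fun hδ => ?_⟩
    rw [Set.notMem_compl_iff] at hδ
    exact hγF.trans_le (hlow ⟨δ, ⟨δ.2, hδ⟩, rfl⟩)
  · rintro ρ γ ⟨hγV, hγmin⟩
    obtain ⟨⟨γ₀, ⟨hγ₀, hγ₀V⟩, hγ₀F⟩, hlow⟩ := hF ρ
    refine le_antisymm ?_ (hlow ⟨γ, ⟨γ.2, hγV⟩, rfl⟩)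
    rcases Set.mem_iInter.1 hγmin ⟨γ₀, hγ₀⟩ with h | h
    · exact absurd hγ₀V h
    · exact hγ₀F ▸ h

lemma IsPiecewiseAffine.of_isGreatest {Γ : Set (Affine n)} (hΓ : Γ.Finite)
    {V : Affine n → Set (Fin n → ℝ)} (hV : ∀ γ, IsSemilinear (V γ))
    (hF : ∀ ρ : Fin n → I, IsGreatest ((fun γ => γ.evalAff (Subtype.val ∘ ρ)) ''
      {γ | γ ∈ Γ ∧ Subtype.val ∘ ρ ∈ V γ}) (F ρ)) :
    IsPiecewiseAffine F := by
  have := hΓ.to_subtype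
  refine isPiecewiseAffine_of_semilinear (ι := Γ)
    (S := fun γ => V γ ∩ ⋂ δ : Γ, (V δ)ᶜ ∪ {r | δ.1.evalAff r ≤ γ.1.evalAff r})
    (fun γ => (hV γ).inter (.iInter fun δ => (hV δ).compl.union (.setOf_le _ _)))
    (fun γ => γ.1) (fun ρ => ?_) ?_
  · obtain ⟨⟨γ, ⟨hγ, hγV⟩, hγF⟩, hup⟩ := hF ρ
    refine ⟨⟨γ, hγ⟩, hγV, Set.mem_iInter.2 fun δ => or_iff_not_imp_left.2 fun hδ => ?_⟩
    rw [Set.notMem_compl_iff] at hδ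
    exact (hup ⟨δ, ⟨δ.2, hδ⟩, rfl⟩).trans_eq hγF.symm
  · rintro ρ γ ⟨hγV, hγmax⟩
    obtain ⟨⟨γ₀, ⟨hγ₀, hγ₀V⟩, hγ₀F⟩, hup⟩ := hF ρ
    refine le_antisymm (hup ⟨γ, ⟨γ.2, hγV⟩, rfl⟩) ?_
    rcases Set.mem_iInter.1 hγmax ⟨γ₀, hγ₀⟩ with h | h
    · exact absurd hγ₀V h
    · exact hγ₀F ▸ h

lemma IsPiecewiseAffine.min (hF : IsPiecewiseAffine F) (hG : IsPiecewiseAffine G) :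
    IsPiecewiseAffine fun ρ => min (F ρ) (G ρ) :=
  hF.map₂ _ (fun g₁ g₂ => of_isLeast (Set.toFinite {g₁, g₂}) (fun _ => .univ) fun ρ => by
    simpa only [Set.mem_univ, and_true, Set.ofPred_mem_eq, Set.image_pair] using isLeast_pair) hG

lemma IsPiecewiseAffine.max (hF : IsPiecewiseAffine F) (hG : IsPiecewiseAffine G) :
    IsPiecewiseAffine fun ρ => max (F ρ) (G ρ) :=
  hF.map₂ _ (fun g₁ g₂ => of_isGreatest (Set.toFinite {g₁, g₂}) (fun _ => .univ) fun ρ => by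
    simpa only [Set.mem_univ, and_true, Set.ofPred_mem_eq, Set.image_pair] using isGreatest_pair) hG

end PiecewiseAffine

lemma IsSemilinear.exists_substLast {S : Set (Fin (n + 1) → ℝ)} (hS : IsSemilinear S)
    {P : (Fin (n + 1) → I) → Prop} (hP : ∀ ρ, Subtype.val ∘ ρ ∈ S ↔ P ρ) (γ : Affine n) :
    ∃ V, IsSemilinear V ∧ ∀ ρ : Fin n → I,
      Subtype.val ∘ ρ ∈ V ↔ ∃ x : I, (x : ℝ) = γ.evalAff (Subtype.val ∘ ρ) ∧ P (Fin.snoc ρ x) := by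
  refine ⟨{r | (Affine.const 0).evalAff r ≤ γ.evalAff r}
      ∩ {r | γ.evalAff r ≤ (Affine.const 1).evalAff r}
      ∩ (fun r => Fin.snoc r (γ.evalAff r)) ⁻¹' S,
    ((setOf_le _ _).inter (setOf_le _ _)).inter (hS.preimage_snoc γ), fun ρ => ?_⟩
  simp only [Set.mem_inter_iff, Set.mem_ofPred_eq, Set.mem_preimage, Affine.evalAff_const,
    Rat.cast_zero, Rat.cast_one]
  constructor
  · rintro ⟨⟨h0, h1⟩, hγS⟩
    exact ⟨⟨_, h0, h1⟩, rfl, (hP _).1 (by rwa [Fin.comp_snoc])⟩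
  · rintro ⟨x, hx, hPx⟩
    rw [← hx]
    exact ⟨x.2, by rw [← Fin.comp_snoc]; exact (hP _).2 hPx⟩

namespace PiecewiseAffineRep

variable {f : (Fin (n + 1) → I) → ℝ} (R : PiecewiseAffineRep f)

def fixedPointCandidates : Set (Affine n) :=
  {Affine.const 0, Affine.const 1} ∪ Set.range (fun i => (R.map i).fixpoint)
    ∪ ⋃ i, AffIneq.root '' ↑(R.cell i)

lemma finite_fixedPointCandidates : R.fixedPointCandidates.Finite :=
  ((Set.toFinite _).union (Set.finite_range _)).union
    (Set.finite_iUnion fun i => (R.cell i).finite_toSet.image _)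

/-- If `p` is no candidate, the affine piece at `(ρ, p)` is `x ↦ x` and `p` is not a root of any
inequality bounding its cell. -/
lemma exists_candidate_or_eventually_fixed {ρ : Fin n → I} {p : I} (hp : f (Fin.snoc ρ p) = p) :
    (∃ γ ∈ R.fixedPointCandidates, γ.evalAff (Subtype.val ∘ ρ) = p) ∨
      ∀ᶠ y in 𝓝 (p : ℝ), ∀ hy : y ∈ I, f (Fin.snoc ρ ⟨y, hy⟩) = y := by
  obtain ⟨i, hi⟩ := R.exists_mem_cell (Fin.snoc ρ p)
  have hfix := R.evalAff_eq _ i hi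
  rw [hp, Fin.comp_snoc] at hfix
  rw [Fin.comp_snoc] at hi
  by_cases ha : (R.map i).lastCoeff = 1
  · by_cases hroot : ∃ c ∈ R.cell i, c.slope ≠ 0 ∧ c.root.evalAff (Subtype.val ∘ ρ) = p
    · obtain ⟨c, hc, -, hcp⟩ := hroot
      exact .inl ⟨c.root, .inr (Set.mem_iUnion.2 ⟨i, c, hc, rfl⟩), hcp⟩
    push Not at hroot
    have hcell : ∀ᶠ y in 𝓝 (p : ℝ), Fin.snoc (Subtype.val ∘ ρ) y ∈ polyhedron (R.cell i) :=
      (Finset.eventually_all _).2 fun c hc => AffIneq.eventually_holds_snoc (hi c hc) (hroot c hc)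
    refine .inr (hcell.mono fun y hy hyI => ?_)
    rw [← R.evalAff_eq _ i (by rwa [Fin.comp_snoc]), Fin.comp_snoc, Affine.evalAff_snoc]
    rw [Affine.evalAff_snoc] at hfix
    simp only [ha, Rat.cast_one, one_mul] at hfix ⊢
    linarith
  · exact .inl ⟨(R.map i).fixpoint, .inl (.inr ⟨i, rfl⟩), Affine.evalAff_fixpoint ha hfix⟩

end PiecewiseAffineRep

section FixedPoints

variable {f : (Fin (n + 1) → I) → I} (hf : ∀ ρ, Monotone fun x => f (Fin.snoc ρ x))

lemma PiecewiseAffineRep.exists_candidate_eq_lfp (R : PiecewiseAffineRep fun ρ => (f ρ : ℝ))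
    (ρ : Fin n → I) :
    ∃ γ ∈ R.fixedPointCandidates, γ.evalAff (Subtype.val ∘ ρ) = OrderHom.lfp ⟨_, hf ρ⟩ := by
  set φ : I →o I := ⟨_, hf ρ⟩
  rcases (OrderHom.lfp φ).2.1.eq_or_lt with h0 | hpos
  · exact ⟨Affine.const 0, .inl (.inl (.inl rfl)), by simp [← h0]⟩
  refine (R.exists_candidate_or_eventually_fixed (congrArg Subtype.val φ.map_lfp)).resolve_right
    fun hfixed => ?_
  obtain ⟨y, hy, hy0, hyp⟩ :=
    ((hfixed.filter_mono nhdsWithin_le_nhds).and (Ioo_mem_nhdsLT hpos)).exists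
  have hyI : y ∈ I := ⟨hy0.le, hyp.le.trans (OrderHom.lfp φ).2.2⟩
  have hφy : OrderHom.lfp φ ≤ ⟨y, hyI⟩ := φ.lfp_le (Subtype.ext (hy hyI)).le
  exact hyp.not_ge hφy

lemma PiecewiseAffineRep.exists_candidate_eq_gfp (R : PiecewiseAffineRep fun ρ => (f ρ : ℝ))
    (ρ : Fin n → I) :
    ∃ γ ∈ R.fixedPointCandidates, γ.evalAff (Subtype.val ∘ ρ) = OrderHom.gfp ⟨_, hf ρ⟩ := by
  set φ : I →o I := ⟨_, hf ρ⟩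
  rcases (OrderHom.gfp φ).2.2.eq_or_lt with h1 | hlt
  · exact ⟨Affine.const 1, .inl (.inl (.inr rfl)), by simp [h1]⟩
  refine (R.exists_candidate_or_eventually_fixed (congrArg Subtype.val φ.map_gfp)).resolve_right
    fun hfixed => ?_
  obtain ⟨y, hy, hpy, hy1⟩ :=
    ((hfixed.filter_mono nhdsWithin_le_nhds).and (Ioo_mem_nhdsGT hlt)).exists
  have hyI : y ∈ I := ⟨(OrderHom.gfp φ).2.1.trans hpy.le, hy1.le⟩
  have hyφ : (⟨y, hyI⟩ : I) ≤ OrderHom.gfp φ := φ.le_gfp (Subtype.ext (hy hyI)).ge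
  exact hpy.not_ge hyφ

theorem IsPiecewiseAffine.lfp (hpw : IsPiecewiseAffine fun ρ => (f ρ : ℝ)) :
    IsPiecewiseAffine fun ρ => ((OrderHom.lfp ⟨_, hf ρ⟩ : I) : ℝ) := by
  obtain ⟨S, hS, hSf⟩ := hpw.exists_semilinear_le (isPiecewiseAffine_coord (Fin.last n))
  choose V hV hVγ using fun γ => hS.exists_substLast hSf γ
  obtain ⟨R⟩ := hpw
  refine .of_isLeast R.finite_fixedPointCandidates hV fun ρ => ⟨?_, ?_⟩
  · obtain ⟨γ, hγ, hγp⟩ := R.exists_candidate_eq_lfp hf ρ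
    refine ⟨γ, ⟨hγ, (hVγ γ ρ).2 ⟨_, hγp.symm, ?_⟩⟩, hγp⟩
    rw [Fin.snoc_last]
    exact (OrderHom.map_lfp (⟨_, hf ρ⟩ : I →o I)).le
  · rintro _ ⟨γ, ⟨-, hγV⟩, rfl⟩
    obtain ⟨x, hx, hfx⟩ := (hVγ γ ρ).1 hγV
    show _ ≤ γ.evalAff _
    rw [← hx]
    exact OrderHom.lfp_le (⟨_, hf ρ⟩ : I →o I) (by rwa [Fin.snoc_last] at hfx)

theorem IsPiecewiseAffine.gfp (hpw : IsPiecewiseAffine fun ρ => (f ρ : ℝ)) :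
    IsPiecewiseAffine fun ρ => ((OrderHom.gfp ⟨_, hf ρ⟩ : I) : ℝ) := by
  obtain ⟨S, hS, hSf⟩ := (isPiecewiseAffine_coord (Fin.last n)).exists_semilinear_le hpw
  choose V hV hVγ using fun γ => hS.exists_substLast hSf γ
  obtain ⟨R⟩ := hpw
  refine .of_isGreatest R.finite_fixedPointCandidates hV fun ρ => ⟨?_, ?_⟩
  · obtain ⟨γ, hγ, hγp⟩ := R.exists_candidate_eq_gfp hf ρ
    refine ⟨γ, ⟨hγ, (hVγ γ ρ).2 ⟨_, hγp.symm, ?_⟩⟩, hγp⟩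
    rw [Fin.snoc_last]
    exact (OrderHom.map_gfp (⟨_, hf ρ⟩ : I →o I)).ge
  · rintro _ ⟨γ, ⟨-, hγV⟩, rfl⟩
    obtain ⟨x, hx, hfx⟩ := (hVγ γ ρ).1 hγV
    show γ.evalAff _ ≤ _
    rw [← hx]
    exact OrderHom.le_gfp (⟨_, hf ρ⟩ : I →o I) (by rwa [Fin.snoc_last] at hfx)

end FixedPoints

namespace LTerm

lemma monotone_eval (t : LTerm n) : Monotone t.eval := by
  induction t with
  | var i => exact fun _ _ h => h i
  | scal q t ih =>
    intro ρ ρ' h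
    have h' : (t.eval ρ : ℝ) ≤ t.eval ρ' := ih h
    have hq : (0 : ℝ) ≤ q.1 := by exact_mod_cast q.2.1
    simp only [eval, ← Subtype.coe_le_coe, coe_lukScal]
    gcongr
  | join t₁ t₂ ih₁ ih₂ => exact fun _ _ h => max_le_max (ih₁ h) (ih₂ h)
  | meet t₁ t₂ ih₁ ih₂ => exact fun _ _ h => min_le_min (ih₁ h) (ih₂ h)
  | oplus t₁ t₂ ih₁ ih₂ =>
    intro ρ ρ' h
    have h₁ : (t₁.eval ρ : ℝ) ≤ t₁.eval ρ' := ih₁ h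
    have h₂ : (t₂.eval ρ : ℝ) ≤ t₂.eval ρ' := ih₂ h
    simp only [eval, ← Subtype.coe_le_coe, coe_lukAdd]
    gcongr
  | odot t₁ t₂ ih₁ ih₂ =>
    intro ρ ρ' h
    have h₁ : (t₁.eval ρ : ℝ) ≤ t₁.eval ρ' := ih₁ h
    have h₂ : (t₂.eval ρ : ℝ) ≤ t₂.eval ρ' := ih₂ h
    simp only [eval, ← Subtype.coe_le_coe, coe_lukMul]
    gcongr
  | mu t ih => exact fun _ _ h => sInf_le_sInf fun _ hx => (ih (Fin.snoc_le_snoc h le_rfl)).trans hx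
  | nu t ih => exact fun _ _ h => sSup_le_sSup fun _ hx => hx.trans (ih (Fin.snoc_le_snoc h le_rfl))

lemma isPiecewiseAffine_eval (t : LTerm n) : IsPiecewiseAffine fun ρ => (t.eval ρ : ℝ) := by
  induction t with
  | var i => exact isPiecewiseAffine_coord i
  | scal q t ih => exact ih.const_mul q.1
  | join t₁ t₂ ih₁ ih₂ => simpa [eval] using ih₁.max ih₂
  | meet t₁ t₂ ih₁ ih₂ => simpa [eval] using ih₁.min ih₂
  | oplus t₁ t₂ ih₁ ih₂ => simpa [eval] using (isPiecewiseAffine_const 1).min (ih₁.add ih₂)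
  | odot t₁ t₂ ih₁ ih₂ =>
    simpa [eval] using
      (isPiecewiseAffine_const 0).max ((ih₁.add ih₂).sub (isPiecewiseAffine_const 1))
  | mu t ih => exact ih.lfp fun _ _ _ h => t.monotone_eval (Fin.snoc_le_snoc le_rfl h)
  | nu t ih => exact ih.gfp fun _ _ _ h => t.monotone_eval (Fin.snoc_le_snoc le_rfl h)

end LTerm

end

/-- Every Łukasiewicz μ-term `t(x₁, …, xₙ)` is representable by a system of
conditioned linear expressions with rational coefficients: there is a finite
family of pairs `(Cᵢ, eᵢ)` of a finite set of inequalities between rational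
affine maps and a rational affine map such that (1) every `r⃗ ∈ [0,1]ⁿ`
satisfies some `Cᵢ`, and (2) whenever `r⃗ ∈ [0,1]ⁿ` satisfies `Cᵢ`, then
`eᵢ(r⃗) = t(r⃗)`. -/
theorem stmt12 {n : ℕ} (t : LTerm n) :
    ∃ (k : ℕ) (C : Fin k → Finset (AffIneq n)) (e : Fin k → Affine n),
      (∀ ρ : Fin n → I, ∃ i,
          ∀ c ∈ C i, AffIneq.holds c (fun j => ((ρ j : I) : ℝ))) ∧
        (∀ (ρ : Fin n → I) (i : Fin k),
          (∀ c ∈ C i, AffIneq.holds c (fun j => ((ρ j : I) : ℝ))) →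
            (e i).evalAff (fun j => ((ρ j : I) : ℝ)) = ((t.eval ρ : I) : ℝ)) := by
  obtain ⟨R⟩ := t.isPiecewiseAffine_eval
  let toFin := Finite.equivFin R.ι
  refine ⟨Nat.card R.ι, R.cell ∘ toFin.symm, R.map ∘ toFin.symm, fun ρ => ?_,
    fun ρ i hi => R.evalAff_eq ρ _ hi⟩
  obtain ⟨i, hi⟩ := R.exists_mem_cell ρ
  exact ⟨toFin i, by rw [Function.comp_apply, toFin.symm_apply_apply]; exact hi⟩

end
end

section
/- Define h : [0,1] → [0,1] by h(x) = max(1/2, g(x)), where g(x) is the greatest fixed point over [0,1] of the monotone map y ↦ max(0, y + min(1, x + 1/2) − 1). Then h(x) = 1/2 for all x < 1/2 and h(x) = 1 for all x ≥ 1/2; in particular, h is not continuous at x = 1/2. (h is the function denoted by the Łukasiewicz μ-term t′(x) = νy.(y ⊙ (x ⊕ 1/2)) ⊔ 1/2.) -/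
/-!
For `x < 1/2` the map is `y ↦ max 0 (y - ε)` with `ε = 1/2 - x > 0`, whose only fixed point is `0`,
so `h x = 1/2`; for `x ≥ 1/2` it is the identity, whose greatest fixed point is `1`, so `h x = 1`.
A jump from `1/2` to `1` at the limit point `1/2` of `[0, 1/2)` rules out continuity.
-/

open unitInterval

theorem OrderHom.gfp_eq_top_of_map_top {α : Type*} [CompleteLattice α] (f : α →o α)
    (hf : f ⊤ = ⊤) : f.gfp = ⊤ :=
  top_unique (f.le_gfp hf.ge)

theorem eq_zero_of_eq_max_zero_add_sub_one {y c : ℝ} (hc : c < 1)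
    (hy : y = max 0 (y + c - 1)) : y = 0 := by
  rcases max_choice 0 (y + c - 1) with h | h <;> rw [h] at hy
  · exact hy
  · linarith

theorem not_continuousAt_of_forall_eq_of_mem_closure {X Y : Type*} [TopologicalSpace X]
    [TopologicalSpace Y] [T1Space Y] {f : X → Y} {s : Set X} {a : X} {c : Y}
    (ha : a ∈ closure s) (hs : ∀ x ∈ s, f x = c) (hfa : f a ≠ c) : ¬ ContinuousAt f a := by
  intro hf
  have himage : f '' s ⊆ {c} := by
    rintro _ ⟨x, hx, rfl⟩
    exact hs x hx
  have := closure_mono himage (mem_closure_image hf ha)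
  rw [closure_singleton] at this
  exact hfa this

/-- Let `h x = max (1/2) (g x)`, where `g x` is the greatest fixed point over
`[0,1]` of the monotone map `y ↦ max 0 (y + min 1 (x + 1/2) - 1)`.  Then
`h x = 1/2` for `x < 1/2` and `h x = 1` for `x ≥ 1/2`; in particular `h` is not
continuous at `1/2`.  (`h` is denoted by the μ-term
`t′(x) = νy.(y ⊙ (x ⊕ 1/2)) ⊔ 1/2`.) -/
theorem stmt13 (F : I → (I →o I))
    (hF : ∀ x y : I, ((F x y : I) : ℝ) = max 0 ((y : ℝ) + min 1 ((x : ℝ) + 1/2) - 1))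
    (h : I → I)
    (hh : ∀ x : I, ((h x : I) : ℝ) = max (1/2) ((OrderHom.gfp (F x) : I) : ℝ)) :
    (∀ x : I, (x : ℝ) < 1/2 → ((h x : I) : ℝ) = 1/2) ∧
      (∀ x : I, (1/2 : ℝ) ≤ (x : ℝ) → h x = 1) ∧
        ¬ ContinuousAt h ⟨1/2, by norm_num⟩ := by
  have gfp_of_lt : ∀ x : I, (x : ℝ) < 1/2 → ((F x).gfp : ℝ) = 0 := by
    intro x hx
    have hfix := hF x (F x).gfp
    rw [OrderHom.map_gfp, min_eq_right (by linarith)] at hfix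
    exact eq_zero_of_eq_max_zero_add_sub_one (by linarith) hfix
  have gfp_of_le : ∀ x : I, (1/2 : ℝ) ≤ x → (F x).gfp = 1 := by
    intro x hx
    refine (F x).gfp_eq_top_of_map_top (Subtype.ext ?_)
    rw [hF, min_eq_left (by linarith)]
    simp
  have h_of_lt : ∀ x : I, (x : ℝ) < 1/2 → ((h x : I) : ℝ) = 1/2 := by
    intro x hx
    rw [hh, gfp_of_lt x hx]
    norm_num
  have h_of_le : ∀ x : I, (1/2 : ℝ) ≤ x → h x = 1 := by
    intro x hx
    ext
    rw [hh, gfp_of_le x hx]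
    norm_num
  refine ⟨h_of_lt, h_of_le, ?_⟩
  set a : I := ⟨1/2, by norm_num⟩
  refine not_continuousAt_of_forall_eq_of_mem_closure (s := Set.Iio a) (c := ⟨1/2, by norm_num⟩)
    ?_ (fun x hx => Subtype.ext (h_of_lt x hx)) ?_
  · rw [closure_Iio' ⟨0, show (0 : ℝ) < 1/2 by norm_num⟩]
    exact Set.mem_Iic.2 le_rfl
  · rw [h_of_le a le_rfl, Ne, Subtype.ext_iff]
    norm_num
end
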